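/- Generation lemma for basis terms: for any context Γ, type T and basis term b, if Γ ⊢ b : T, then there exist unit types U₁,…,Uₙ and scalars α₁,…,αₙ such that T ≡ Σᵢ₌₁ⁿ αᵢ·Uᵢ, Γ ⊢ b : Uᵢ for each i ∈ {1,…,n}, and Σᵢ₌₁ⁿ αᵢ = 1. -/

import Mathlib

/- Types of λvec_R: general types and unit types (mutual) -/
mutual
inductive UTy (S : Type) : Type where
  | uvar : ℕ → UTy S
  | arrow : UTy S → Ty S → UTy S
  | fallU : ℕ → UTy S → UTy S
  | fallG : ℕ → UTy S → UTy S
inductive Ty (S : Type) : Type where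
  | unit : UTy S → Ty S
  | smul : S → Ty S → Ty S
  | add : Ty S → Ty S → Ty S
  | gvar : ℕ → Ty S
end

/- Type equivalence: the smallest congruence with the weak-module axioms -/
mutual
inductive UEquiv {S : Type} [CommRing S] : UTy S → UTy S → Prop where
  | refl (U : UTy S) : UEquiv U U
  | symm : UEquiv U V → UEquiv V U
  | trans : UEquiv U V → UEquiv V W → UEquiv U W
  | arrow : UEquiv U V → TEquiv T R → UEquiv (.arrow U T) (.arrow V R)
  | fallU : UEquiv U V → UEquiv (.fallU X U) (.fallU X V)
  | fallG : UEquiv U V → UEquiv (.fallG X U) (.fallG X V)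
inductive TEquiv {S : Type} [CommRing S] : Ty S → Ty S → Prop where
  | refl (T : Ty S) : TEquiv T T
  | symm : TEquiv T R → TEquiv R T
  | trans : TEquiv T R → TEquiv R P → TEquiv T P
  | unit : UEquiv U V → TEquiv (.unit U) (.unit V)
  | smul : TEquiv T R → TEquiv (.smul a T) (.smul a R)
  | addL : TEquiv T R → TEquiv (.add T P) (.add R P)
  | addR : TEquiv T R → TEquiv (.add P T) (.add P R)
  | one_smul (T : Ty S) : TEquiv (.smul 1 T) T
  | smul_smul : TEquiv (.smul a (.smul b T)) (.smul (a*b) T)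
  | smul_add : TEquiv (.add (.smul a T) (.smul a R)) (.smul a (.add T R))
  | add_smul : TEquiv (.add (.smul a T) (.smul b T)) (.smul (a+b) T)
  | comm : TEquiv (.add T R) (.add R T)
  | assoc : TEquiv (.add T (.add R P)) (.add (.add T R) P)
end

/- substitution of a unit type variable by a unit type -/
mutual
def UTy.substU {S : Type} : UTy S → ℕ → UTy S → UTy S
  | .uvar m, X, A => if m = X then A else .uvar m
  | .arrow U T, X, A => .arrow (U.substU X A) (T.substU X A)
  | .fallU m U, X, A => if m = X then .fallU m U else .fallU m (U.substU X A)
  | .fallG m U, X, A => .fallG m (U.substU X A)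
def Ty.substU {S : Type} : Ty S → ℕ → UTy S → Ty S
  | .unit U, X, A => .unit (U.substU X A)
  | .smul a T, X, A => .smul a (T.substU X A)
  | .add T R, X, A => .add (T.substU X A) (R.substU X A)
  | .gvar m, _, _ => .gvar m
end

/- substitution of a general type variable by a general type -/
mutual
def UTy.substG {S : Type} : UTy S → ℕ → Ty S → UTy S
  | .uvar m, _, _ => .uvar m
  | .arrow U T, X, A => .arrow (U.substG X A) (T.substG X A)
  | .fallU m U, X, A => .fallU m (U.substG X A)
  | .fallG m U, X, A => if m = X then .fallG m U else .fallG m (U.substG X A)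
def Ty.substG {S : Type} : Ty S → ℕ → Ty S → Ty S
  | .unit U, X, A => .unit (U.substG X A)
  | .smul a T, X, A => .smul a (T.substG X A)
  | .add T R, X, A => .add (T.substG X A) (R.substG X A)
  | .gvar m, X, A => if m = X then A else .gvar m
end

/- free type variables; a variable is (false, n) for a unit variable X_n
   and (true, n) for a general variable 𝕏_n -/
mutual
def UTy.fv {S : Type} : UTy S → Set (Bool × ℕ)
  | .uvar n => {(false, n)}
  | .arrow U T => U.fv ∪ T.fv
  | .fallU n U => U.fv \ {(false, n)}
  | .fallG n U => U.fv \ {(true, n)}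
def Ty.fv {S : Type} : Ty S → Set (Bool × ℕ)
  | .unit U => U.fv
  | .smul _ T => T.fv
  | .add T R => T.fv ∪ R.fv
  | .gvar n => {(true, n)}
end
/- a single substitution item: a type variable together with a type of the matching kind -/
inductive TSub (S : Type) : Type where
  | u : ℕ → UTy S → TSub S
  | g : ℕ → Ty S → TSub S

def TSub.var {S : Type} : TSub S → Bool × ℕ
  | .u X _ => (false, X)
  | .g X _ => (true, X)

def Ty.applySub {S : Type} : Ty S → TSub S → Ty S
  | T, .u X A => T.substU X A
  | T, .g X A => T.substG X A

def UTy.applySub {S : Type} : UTy S → TSub S → UTy S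
  | U, .u X A => U.substU X A
  | U, .g X A => U.substG X A

def Ty.applySubs {S : Type} (T : Ty S) (σ : List (TSub S)) : Ty S := σ.foldl Ty.applySub T
def UTy.applySubs {S : Type} (U : UTy S) (σ : List (TSub S)) : UTy S := σ.foldl UTy.applySub U

/- ∀X.U for a variable of either kind, and iterated foralls -/
def mkForall {S : Type} (X : Bool × ℕ) (U : UTy S) : UTy S :=
  if X.1 then .fallG X.2 U else .fallU X.2 U
def mkForalls {S : Type} (Xs : List (Bool × ℕ)) (U : UTy S) : UTy S := Xs.foldr mkForall U

/- the linear combination Σᵢ αᵢ·Tᵢ represented by a (nonempty) list of pairs -/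
def combo {S : Type} : List (S × Ty S) → Ty S
  | [] => .gvar 0
  | [p] => .smul p.1 p.2
  | p :: q :: L => .add (.smul p.1 p.2) (combo (q :: L))

/- sum of the scalars of a linear combination -/
def weightOf {S : Type} [CommRing S] {α : Type} (L : List (S × α)) : S := (L.map Prod.fst).sum

/- Terms of λvec_R -/
inductive Term (S : Type) : Type where
  | var : ℕ → Term S
  | lam : ℕ → Term S → Term S
  | app : Term S → Term S → Term S
  | smul : S → Term S → Term S
  | add : Term S → Term S → Term S

/- basis terms: variables and abstractions -/
inductive IsBasis {S : Type} : Term S → Prop where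
  | var : IsBasis (.var x)
  | lam : IsBasis (.lam x t)

def Term.fv {S : Type} : Term S → Set ℕ
  | .var x => {x}
  | .lam x t => t.fv \ {x}
  | .app t r => t.fv ∪ r.fv
  | .smul _ t => t.fv
  | .add t r => t.fv ∪ r.fv

/- term substitution t[b/x] -/
def Term.subst {S : Type} : Term S → ℕ → Term S → Term S
  | .var y, x, b => if y = x then b else .var y
  | .lam y t, x, b => if y = x then .lam y t else .lam y (t.subst x b)
  | .app t r, x, b => .app (t.subst x b) (r.subst x b)
  | .smul a t, x, b => .smul a (t.subst x b)
  | .add t r, x, b => .add (t.subst x b) (r.subst x b)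

/- typing contexts: partial maps from term variables to unit types -/
def Ctx (S : Type) : Type := ℕ → Option (UTy S)

def Ctx.update {S : Type} (Γ : Ctx S) (x : ℕ) (U : UTy S) : Ctx S :=
  fun y => if y = x then some U else Γ y

def Ctx.fv {S : Type} (Γ : Ctx S) : Set (Bool × ℕ) :=
  {v | ∃ x U, Γ x = some U ∧ v ∈ UTy.fv U}

def Ctx.applySub {S : Type} (Γ : Ctx S) (s : TSub S) : Ctx S :=
  fun x => (Γ x).map (fun U => U.applySub s)
/- Sized typing judgement: `TypesN n Γ t T` means Γ ⊢ t : T has a derivation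
   with n sequents. -/
inductive TypesN {S : Type} [CommRing S] : ℕ → Ctx S → Term S → Ty S → Prop where
  | ax : Γ x = some U → TypesN 1 Γ (.var x) (.unit U)
  | equiv : TypesN n Γ t T → TEquiv T R → TypesN (n+1) Γ t R
  | arrI : TypesN n (Γ.update x U) t T → TypesN (n+1) Γ (.lam x t) (.unit (.arrow U T))
  | arrE (Xs : List (Bool × ℕ)) (U : UTy S) (L : List (S × Ty S)) (M : List (S × List (TSub S))) :
      L ≠ [] → M ≠ [] →
      (∀ q ∈ M, q.2.map TSub.var = Xs) →
      TypesN n Γ t (combo (L.map fun p => (p.1, Ty.unit (mkForalls Xs (.arrow U p.2))))) →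
      TypesN m Γ r (combo (M.map fun q => (q.1, (Ty.unit U).applySubs q.2))) →
      TypesN (n+m+1) Γ (.app t r)
        (combo (L.flatMap fun p => M.map fun q => (p.1 * q.1, p.2.applySubs q.2)))
  | fallI (L : List (S × UTy S)) (X : Bool × ℕ) :
      L ≠ [] → X ∉ Γ.fv →
      TypesN n Γ t (combo (L.map fun p => (p.1, Ty.unit p.2))) →
      TypesN (n+1) Γ t (combo (L.map fun p => (p.1, Ty.unit (mkForall X p.2))))
  | fallE (L : List (S × UTy S)) (s : TSub S) :
      L ≠ [] →
      TypesN n Γ t (combo (L.map fun p => (p.1, Ty.unit (mkForall s.var p.2)))) →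
      TypesN (n+1) Γ t (combo (L.map fun p => (p.1, (Ty.unit p.2).applySub s)))
  | addI : TypesN n Γ t T → TypesN m Γ r R → TypesN (n+m+1) Γ (.add t r) (.add T R)
  | oneE : TypesN n Γ (.smul 1 t) T → TypesN (n+1) Γ t T
  | sum (L : List (ℕ × S × Ty S)) :
      L ≠ [] →
      (∀ p ∈ L, TypesN p.1 Γ t p.2.2) →
      TypesN ((L.map Prod.fst).sum + 1) Γ (.smul (weightOf (L.map Prod.snd)) t)
        (combo (L.map Prod.snd))

/- the typing judgement Γ ⊢ t : T -/
def Types {S : Type} [CommRing S] (Γ : Ctx S) (t : Term S) (T : Ty S) : Prop :=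
  ∃ n, TypesN n Γ t T

/- the relation ≺_{X,Γ} -/
inductive Prec {S : Type} [CommRing S] (Γ : Ctx S) : (Bool × ℕ) → Ty S → Ty S → Prop where
  | intro (X : Bool × ℕ) (L : List (S × UTy S)) :
      X ∉ Γ.fv → L ≠ [] →
      TEquiv R (combo (L.map fun p => (p.1, Ty.unit p.2))) →
      TEquiv T (combo (L.map fun p => (p.1, Ty.unit (mkForall X p.2)))) →
      Prec Γ X R T
  | elim (s : TSub S) (L : List (S × UTy S)) :
      s.var ∉ Γ.fv → L ≠ [] →
      TEquiv R (combo (L.map fun p => (p.1, Ty.unit (mkForall s.var p.2)))) →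
      TEquiv T (combo (L.map fun p => (p.1, (Ty.unit p.2).applySub s))) →
      Prec Γ s.var R T

/- the relation ⪯_{𝒱,Γ} -/
inductive Preceq {S : Type} [CommRing S] (Γ : Ctx S) : Set (Bool × ℕ) → Ty S → Ty S → Prop where
  | prec : V ∩ Γ.fv = ∅ → Prec Γ X R T → Preceq Γ (V ∪ {X}) R T
  | trans : Preceq Γ V₁ A B → Preceq Γ V₂ B C → Preceq Γ (V₁ ∪ V₂) A C
  | equiv : V ∩ Γ.fv = ∅ → TEquiv R T → Preceq Γ V R T

/- the reduction relation → -/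
inductive Step {S : Type} [CommRing S] : Term S → Term S → Prop where
  -- Group E
  | oneSmul : Step (.smul 1 t) t
  | smulSmul : Step (.smul a (.smul b t)) (.smul (a*b) t)
  | smulAdd : Step (.smul a (.add t r)) (.add (.smul a t) (.smul a r))
  -- Group F
  | factor : Step (.add (.smul a t) (.smul b t)) (.smul (a+b) t)
  | factorOne : Step (.add (.smul a t) t) (.smul (a+1) t)
  | factorNone : Step (.add t t) (.smul (1+1) t)
  -- Group B
  | beta : IsBasis b → Step (.app (.lam x t) b) (t.subst x b)
  -- Group A
  | appAddL : Step (.app (.add t r) u) (.add (.app t u) (.app r u))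
  | appAddR : Step (.app t (.add r u)) (.add (.app t r) (.app t u))
  | appSmulL : Step (.app (.smul a t) r) (.smul a (.app t r))
  | appSmulR : Step (.app t (.smul a r)) (.smul a (.app t r))
  -- contextual rules
  | ctxSmul : Step t r → Step (.smul a t) (.smul a r)
  | ctxAddR : Step t r → Step (.add u t) (.add u r)
  | ctxAppR : Step t r → Step (.app u t) (.app u r)
  | ctxAppL : Step t r → Step (.app t u) (.app r u)
  | ctxLam : Step t r → Step (.lam x t) (.lam x r)

/- values: sums (in any association) of pairwise-distinct abstractions, possibly scaled -/
inductive SumOf {S : Type} : Term S → List (Term S) → Prop where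
  | leaf (t : Term S) : SumOf t [t]
  | add : SumOf t L → SumOf r M → SumOf (.add t r) (L ++ M)

inductive VEntry {S : Type} : Term S → Prop where
  | lam : VEntry (.lam x t)
  | smul : VEntry (.smul a (.lam x t))

def lamOf {S : Type} : Term S → Term S
  | .smul _ b => b
  | b => b

def IsValue {S : Type} (t : Term S) : Prop :=
  ∃ L : List (Term S), SumOf t L ∧ (∀ e ∈ L, VEntry e) ∧ (L.map lamOf).Pairwise (· ≠ ·)

/- weight of types and of terms -/
def Ty.weight {S : Type} [CommRing S] : Ty S → S
  | .unit _ => 1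
  | .gvar _ => 1
  | .smul a T => a * T.weight
  | .add T R => T.weight + R.weight

def Term.weight {S : Type} [CommRing S] : Term S → S
  | .var _ => 1
  | .lam _ _ => 1
  | .app _ _ => 1
  | .smul a t => a * t.weight
  | .add t r => t.weight + r.weight

/-!
Induction on the typing derivation, for the more general terms `α₁·(…·(αₖ·b))` and target weight
`α₁⋯αₖ`, because the premises of (1E) and (S) have that form. When `k = 0` the last rule is (ax)
or (→I), giving a single unit type of weight 1, or one of the following. Rule (≡) is absorbed by
transitivity. Rules (∀I) and (∀E) act separately on each unit type of the decomposition, and type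
equivalence is preserved by such pointwise maps of unit types. Rule (S) glues together the
decompositions of its premises, multiplying the weights.
-/

section

variable {S : Type}

def Ty.umap (f : UTy S → UTy S) : Ty S → Ty S
  | .unit U => .unit (f U)
  | .smul a T => .smul a (T.umap f)
  | .add T R => .add (T.umap f) (R.umap f)
  | .gvar n => .gvar n

theorem Ty.umap_combo (f : UTy S → UTy S) :
    ∀ L : List (S × Ty S), (combo L).umap f = combo (L.map fun p => (p.1, p.2.umap f))
  | [] => rfl
  | [_] => rfl
  | p :: q :: L => by
      simp only [combo, Ty.umap, Ty.umap_combo f (q :: L), List.map_cons]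

theorem Ty.unit_applySub (U : UTy S) (s : TSub S) :
    (Ty.unit U).applySub s = .unit (U.applySub s) := by
  cases s <;> rfl

/- Instantiation of an outermost `∀` over the variable of `s`, extended by the identity to unit
types of any other shape so that it can be mapped over every unit type of a general type. -/
def stripSub : TSub S → UTy S → UTy S
  | .u X A, .fallU m V => if m = X then V.substU X A else .fallU m V
  | .g X A, .fallG m V => if m = X then V.substG X A else .fallG m V
  | _, V => V

theorem stripSub_mkForall (s : TSub S) (U : UTy S) :
    stripSub s (mkForall s.var U) = U.applySub s := by
  cases s <;> simp [stripSub, mkForall, TSub.var, UTy.applySub]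

theorem stripSub_eq_self_or (s : TSub S) (U : UTy S) :
    stripSub s U = U ∨ ∃ V, U = mkForall s.var V ∧ stripSub s U = V.applySub s := by
  cases s <;> cases U <;> simp only [stripSub, true_or]
  case u.fallU X A m V | g.fallG X A m V =>
    by_cases hm : m = X
    · subst hm
      exact .inr ⟨V, by simp [mkForall, TSub.var], by simp [UTy.applySub]⟩
    · simp [hm]

end

section

variable {S : Type} [CommRing S]

mutual
theorem UEquiv.substU_congr (X : ℕ) (A : UTy S) {U V : UTy S} :
    UEquiv U V → UEquiv (U.substU X A) (V.substU X A)
  | .refl _ => .refl _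
  | .symm h => .symm (h.substU_congr X A)
  | .trans h h' => .trans (h.substU_congr X A) (h'.substU_congr X A)
  | .arrow h e => .arrow (h.substU_congr X A) (e.substU_congr X A)
  | .fallU (X := m) h => by
      by_cases hm : m = X
      · simpa [UTy.substU, hm] using UEquiv.fallU h
      · simpa [UTy.substU, hm] using UEquiv.fallU (h.substU_congr X A)
  | .fallG h => .fallG (h.substU_congr X A)
theorem TEquiv.substU_congr (X : ℕ) (A : UTy S) {T R : Ty S} :
    TEquiv T R → TEquiv (T.substU X A) (R.substU X A)
  | .refl _ => .refl _
  | .symm h => .symm (h.substU_congr X A)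
  | .trans h h' => .trans (h.substU_congr X A) (h'.substU_congr X A)
  | .unit h => .unit (h.substU_congr X A)
  | .smul h => .smul (h.substU_congr X A)
  | .addL h => .addL (h.substU_congr X A)
  | .addR h => .addR (h.substU_congr X A)
  | .one_smul _ => .one_smul _
  | .smul_smul => .smul_smul
  | .smul_add => .smul_add
  | .add_smul => .add_smul
  | .comm => .comm
  | .assoc => .assoc
end

mutual
theorem UEquiv.substG_congr (X : ℕ) (A : Ty S) {U V : UTy S} :
    UEquiv U V → UEquiv (U.substG X A) (V.substG X A)
  | .refl _ => .refl _
  | .symm h => .symm (h.substG_congr X A)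
  | .trans h h' => .trans (h.substG_congr X A) (h'.substG_congr X A)
  | .arrow h e => .arrow (h.substG_congr X A) (e.substG_congr X A)
  | .fallU h => .fallU (h.substG_congr X A)
  | .fallG (X := m) h => by
      by_cases hm : m = X
      · simpa [UTy.substG, hm] using UEquiv.fallG h
      · simpa [UTy.substG, hm] using UEquiv.fallG (h.substG_congr X A)
theorem TEquiv.substG_congr (X : ℕ) (A : Ty S) {T R : Ty S} :
    TEquiv T R → TEquiv (T.substG X A) (R.substG X A)
  | .refl _ => .refl _
  | .symm h => .symm (h.substG_congr X A)
  | .trans h h' => .trans (h.substG_congr X A) (h'.substG_congr X A)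
  | .unit h => .unit (h.substG_congr X A)
  | .smul h => .smul (h.substG_congr X A)
  | .addL h => .addL (h.substG_congr X A)
  | .addR h => .addR (h.substG_congr X A)
  | .one_smul _ => .one_smul _
  | .smul_smul => .smul_smul
  | .smul_add => .smul_add
  | .add_smul => .add_smul
  | .comm => .comm
  | .assoc => .assoc
end

theorem UEquiv.mkForall_congr (X : Bool × ℕ) {U V : UTy S} (h : UEquiv U V) :
    UEquiv (mkForall X U) (mkForall X V) := by
  unfold mkForall
  split
  · exact .fallG h
  · exact .fallU h

theorem UEquiv.stripSub_congr (s : TSub S) {U V : UTy S} :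
    UEquiv U V → UEquiv (stripSub s U) (stripSub s V)
  | .refl _ => .refl _
  | .symm h => .symm (h.stripSub_congr s)
  | .trans h h' => .trans (h.stripSub_congr s) (h'.stripSub_congr s)
  | .arrow h e => by cases s <;> exact .arrow h e
  | .fallU (X := m) h => by
      cases s with
      | u X A =>
        by_cases hm : m = X
        · simpa [stripSub, hm] using h.substU_congr X A
        · simpa [stripSub, hm] using UEquiv.fallU h
      | g => exact .fallU h
  | .fallG (X := m) h => by
      cases s with
      | g X A =>
        by_cases hm : m = X
        · simpa [stripSub, hm] using h.substG_congr X A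
        · simpa [stripSub, hm] using UEquiv.fallG h
      | u => exact .fallG h

theorem TEquiv.umap_congr {f : UTy S → UTy S}
    (hf : ∀ {U V : UTy S}, UEquiv U V → UEquiv (f U) (f V)) {T R : Ty S} :
    TEquiv T R → TEquiv (T.umap f) (R.umap f)
  | .refl _ => .refl _
  | .symm h => .symm (h.umap_congr hf)
  | .trans h h' => .trans (h.umap_congr hf) (h'.umap_congr hf)
  | .unit h => .unit (hf h)
  | .smul h => .smul (h.umap_congr hf)
  | .addL h => .addL (h.umap_congr hf)
  | .addR h => .addR (h.umap_congr hf)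
  | .one_smul _ => .one_smul _
  | .smul_smul => .smul_smul
  | .smul_add => .smul_add
  | .add_smul => .add_smul
  | .comm => .comm
  | .assoc => .assoc

theorem combo_append_equiv :
    ∀ {A B : List (S × Ty S)}, A ≠ [] → B ≠ [] →
      TEquiv (combo (A ++ B)) (.add (combo A) (combo B))
  | [_], _ :: _, _, _ => .refl _
  | p :: p' :: A, B, _, hB => by
      have h : combo (p :: p' :: A ++ B) = .add (.smul p.1 p.2) (combo (p' :: A ++ B)) := by
        cases A <;> rfl
      rw [h]
      exact .trans (.addR (combo_append_equiv (List.cons_ne_nil _ _) hB)) .assoc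

theorem smul_combo_equiv (a : S) :
    ∀ {L : List (S × Ty S)}, L ≠ [] →
      TEquiv (.smul a (combo L)) (combo (L.map fun p => (a * p.1, p.2)))
  | [_], _ => .smul_smul
  | _ :: q :: L, _ =>
      .trans (.symm .smul_add)
        (.trans (.addL .smul_smul) (.addR (smul_combo_equiv a (List.cons_ne_nil q L))))

def IsUnitCombo (Q : UTy S → Prop) (c : S) (T : Ty S) : Prop :=
  ∃ L : List (S × UTy S), L ≠ [] ∧
    TEquiv T (combo (L.map fun p => (p.1, Ty.unit p.2))) ∧
    (∀ p ∈ L, Q p.2) ∧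
    weightOf L = c

namespace IsUnitCombo

variable {Q : UTy S → Prop} {c d : S} {T R : Ty S}

theorem unit {U : UTy S} (hU : Q U) : IsUnitCombo Q 1 (.unit U) :=
  ⟨[(1, U)], List.cons_ne_nil _ _, .symm (.one_smul _), by simpa using hU, by simp [weightOf]⟩

theorem of_equiv (h : IsUnitCombo Q c T) (e : TEquiv T R) : IsUnitCombo Q c R :=
  let ⟨L, hL, eL, hQ, hw⟩ := h
  ⟨L, hL, .trans (.symm e) eL, hQ, hw⟩

theorem smul (a : S) (h : IsUnitCombo Q c T) : IsUnitCombo Q (a * c) (.smul a T) := by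
  obtain ⟨L, hL, e, hQ, rfl⟩ := h
  refine ⟨L.map fun p => (a * p.1, p.2), by simpa using hL, ?_, ?_, ?_⟩
  · simpa [Function.comp_def] using (TEquiv.smul e).trans (smul_combo_equiv a (by simpa using hL))
  · intro _ hp
    obtain ⟨p, hpL, rfl⟩ := List.mem_map.1 hp
    exact hQ p hpL
  · simp [weightOf, Function.comp_def, List.sum_map_mul_left]

theorem add (h : IsUnitCombo Q c T) (h' : IsUnitCombo Q d R) :
    IsUnitCombo Q (c + d) (.add T R) := by
  obtain ⟨L, hL, e, hQ, rfl⟩ := h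
  obtain ⟨L', hL', e', hQ', rfl⟩ := h'
  refine ⟨L ++ L', by simp [hL], ?_, ?_, by simp [weightOf]⟩
  · rw [List.map_append]
    exact (TEquiv.addL e).trans ((TEquiv.addR e').trans
      (.symm (combo_append_equiv (by simpa using hL) (by simpa using hL'))))
  · simpa [or_imp, forall_and] using And.intro hQ hQ'

theorem combo :
    ∀ {M : List (S × Ty S)}, M ≠ [] → (∀ p ∈ M, IsUnitCombo Q c p.2) →
      IsUnitCombo Q (weightOf M * c) (_root_.combo M)
  | [p], _, h => by simpa [_root_.combo, weightOf] using (h p (by simp)).smul p.1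
  | p :: q :: M, _, h => by
      have hp := (h p (by simp)).smul p.1
      have hM := combo (List.cons_ne_nil q M) fun r hr => h r (List.mem_cons_of_mem p hr)
      simpa [_root_.combo, weightOf, add_mul] using hp.add hM

theorem umap {f : UTy S → UTy S} (hf : ∀ {U V : UTy S}, UEquiv U V → UEquiv (f U) (f V))
    (hQ : ∀ U, Q U → Q (f U)) (h : IsUnitCombo Q c T) : IsUnitCombo Q c (T.umap f) := by
  obtain ⟨L, hL, e, hQL, rfl⟩ := h
  refine ⟨L.map fun p => (p.1, f p.2), by simpa using hL, ?_, ?_, by simp [weightOf, Function.comp_def]⟩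
  · simpa [Ty.umap_combo, Ty.umap, Function.comp_def] using e.umap_congr hf
  · intro _ hp
    obtain ⟨p, hpL, rfl⟩ := List.mem_map.1 hp
    exact hQ _ (hQL p hpL)

end IsUnitCombo

end

section

variable {S : Type} [CommRing S] {Γ : Ctx S} {t : Term S}

theorem Types.equiv {T R : Ty S} (h : Types Γ t T) (e : TEquiv T R) : Types Γ t R :=
  let ⟨n, h⟩ := h
  ⟨n + 1, .equiv h e⟩

theorem Types.one_smul_iff {T : Ty S} : Types Γ t (.smul 1 T) ↔ Types Γ t T :=
  ⟨fun h => h.equiv (.one_smul T), fun h => h.equiv (.symm (.one_smul T))⟩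

theorem Types.forall_intro {U : UTy S} {X : Bool × ℕ} (hX : X ∉ Γ.fv)
    (h : Types Γ t (.unit U)) : Types Γ t (.unit (mkForall X U)) := by
  obtain ⟨n, h⟩ := Types.one_smul_iff.2 h
  exact Types.one_smul_iff.1 ⟨_, TypesN.fallI [(1, U)] X (List.cons_ne_nil _ _) hX h⟩

theorem Types.forall_elim {U : UTy S} (s : TSub S) (h : Types Γ t (.unit (mkForall s.var U))) :
    Types Γ t (.unit (U.applySub s)) := by
  obtain ⟨n, h⟩ := Types.one_smul_iff.2 h
  rw [← Ty.unit_applySub]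
  exact Types.one_smul_iff.1 ⟨_, TypesN.fallE [(1, U)] s (List.cons_ne_nil _ _) h⟩

theorem Types.stripSub {U : UTy S} (s : TSub S) (h : Types Γ t (.unit U)) :
    Types Γ t (.unit (stripSub s U)) := by
  obtain hU | ⟨V, rfl, hV⟩ := stripSub_eq_self_or s U
  · rwa [hU]
  · rw [hV]
    exact h.forall_elim s

end

inductive Scaled {S : Type} [CommRing S] : S → Term S → Term S → Prop where
  | base (b : Term S) : Scaled 1 b b
  | smul {c : S} {b t : Term S} (a : S) : Scaled c b t → Scaled (a * c) b (.smul a t)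

theorem TypesN.isUnitCombo_of_scaled {S : Type} [CommRing S] {n : ℕ} {Γ : Ctx S}
    {t b : Term S} {T : Ty S} {c : S} (h : TypesN n Γ t T) (hb : IsBasis b)
    (hs : Scaled c b t) : IsUnitCombo (fun U => Types Γ b (.unit U)) c T := by
  induction h generalizing c with
  | ax hx =>
    cases hs
    exact .unit ⟨_, .ax hx⟩
  | arrI h _ =>
    cases hs
    exact .unit ⟨_, .arrI h⟩
  | arrE | addI =>
    cases hs
    cases hb
  | equiv _ e ih => exact (ih hs).of_equiv e
  | fallI L X _ hX _ ih =>
    simpa [Ty.umap_combo, Ty.umap, Function.comp_def] using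
      (ih hs).umap (UEquiv.mkForall_congr X) fun _ hU => hU.forall_intro hX
  | fallE L s _ _ ih =>
    simpa [Ty.umap_combo, Ty.umap, Function.comp_def, stripSub_mkForall, Ty.unit_applySub] using
      (ih hs).umap (UEquiv.stripSub_congr s) fun _ hU => hU.stripSub s
  | oneE _ ih => simpa using ih (hs.smul 1)
  | sum L hL _ ih =>
    cases hs with
    | base => cases hb
    | smul _ hs =>
      exact IsUnitCombo.combo (by simpa using hL) fun p hp => by
        obtain ⟨q, hq, rfl⟩ := List.mem_map.1 hp
        exact ih q hq hs

theorem generation_basis_terms {S : Type} [CommRing S]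
    (Γ : Ctx S) (b : Term S) (T : Ty S)
    (hb : IsBasis b) (h : Types Γ b T) :
    ∃ L : List (S × UTy S), L ≠ [] ∧
      TEquiv T (combo (L.map fun p => (p.1, Ty.unit p.2))) ∧
      (∀ p ∈ L, Types Γ b (Ty.unit p.2)) ∧
      weightOf L = 1 := by
  obtain ⟨n, h⟩ := h
  exact h.isUnitCombo_of_scaled hb (.base b)
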